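/- arXiv:1409.2618 — 5 statements merged into one kernel-verified Lean document; each statement's English description precedes it below -/
import Mathlib

section
/- Fix T > 0, x₀ ∈ ℝ and c > 0. For every continuously differentiable curve x : [0,T] → ℝ with x(0) = x₀ and x(T) = 0, one has ∫₀^T ((x'(t))² + c·x(t)²) dt ≥ √c · x₀² · coth(√c T). Moreover the hyperbolic curve x^{MH}(t) = x₀ · sinh(√c (T−t)) / sinh(√c T) satisfies the boundary conditions, is nonincreasing when x₀ ≥ 0, has selling rate −(x^{MH})'(t) = √c x₀ cosh(√c (T−t)) / sinh(√c T), and achieves ∫₀^T ((x^{MH})'(t))² + c·(x^{MH}(t))² dt = √c · x₀² · coth(√c T), so the infimum 𝓘^{MH}(T,x₀) of this cost equals √c x₀² coth(√c T). -/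
/-!
The hyperbolic curve `X` solves the Euler–Lagrange equation `X'' = c X` of the cost
`∫ (x'² + c x²)`. For any competitor `x` with the same endpoints, completing the square gives
`x'² + c x² ≥ (V (2x - X))'` with `V = X'`, so the cost of `x` is at least the boundary term
`[X V]₀ᵀ`, which is exactly the cost of `X` since `(X V)' = V² + c X²`.
-/

open Set intervalIntegral Real

section EulerLagrange

variable {a b c : ℝ} {X V : ℝ → ℝ}

theorem integral_sq_add_mul_sq_eq_of_hasDerivAt (hX : ∀ t ∈ uIcc a b, HasDerivAt X (V t) t)
    (hV : ∀ t ∈ uIcc a b, HasDerivAt V (c * X t) t) :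
    ∫ t in a..b, (V t ^ 2 + c * X t ^ 2) = X b * V b - X a * V a := by
  have hXV : ∀ t ∈ uIcc a b, HasDerivAt (fun t => X t * V t) (V t ^ 2 + c * X t ^ 2) t :=
    fun t ht => ((hX t ht).mul (hV t ht)).congr_deriv (by ring)
  refine integral_eq_sub_of_hasDerivAt hXV (ContinuousOn.intervalIntegrable ?_)
  exact ((HasDerivAt.continuousOn hV).pow 2).add
    (continuousOn_const.mul ((HasDerivAt.continuousOn hX).pow 2))

theorem integral_sq_add_mul_sq_le_of_hasDerivAt (hab : a ≤ b) (hc : 0 ≤ c)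
    (hX : ∀ t ∈ Icc a b, HasDerivAt X (V t) t)
    (hV : ∀ t ∈ Icc a b, HasDerivAt V (c * X t) t)
    {x x' : ℝ → ℝ} (hx : ∀ t ∈ Icc a b, HasDerivAt x (x' t) t)
    (hint : MeasureTheory.IntegrableOn (fun t => x' t ^ 2 + c * x t ^ 2) (Icc a b))
    (hxa : x a = X a) (hxb : x b = X b) :
    ∫ t in a..b, (V t ^ 2 + c * X t ^ 2) ≤ ∫ t in a..b, (x' t ^ 2 + c * x t ^ 2) := by
  rw [integral_sq_add_mul_sq_eq_of_hasDerivAt (uIcc_of_le hab ▸ hX) (uIcc_of_le hab ▸ hV)]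
  have hg : ∀ t ∈ Icc a b, HasDerivAt (fun t => V t * (2 * x t - X t))
      (c * X t * (2 * x t - X t) + V t * (2 * x' t - V t)) t :=
    fun t ht => (hV t ht).mul (((hx t ht).const_mul 2).sub (hX t ht))
  have hsquare : ∀ t ∈ Ioo a b,
      c * X t * (2 * x t - X t) + V t * (2 * x' t - V t) ≤ x' t ^ 2 + c * x t ^ 2 :=
    fun t _ => by nlinarith [sq_nonneg (x' t - V t), mul_nonneg hc (sq_nonneg (x t - X t))]
  have hbound := sub_le_integral_of_hasDeriv_right_of_le hab (HasDerivAt.continuousOn hg)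
    (fun t ht => (hg t (Ioo_subset_Icc_self ht)).hasDerivWithinAt) hint hsquare
  simp only [hxa, hxb] at hbound
  linarith

end EulerLagrange

section HyperbolicCurve

variable (c T x₀ : ℝ)

noncomputable def hyperbolicCurve (t : ℝ) : ℝ := x₀ * sinh (√c * (T - t)) / sinh (√c * T)

noncomputable def hyperbolicRate (t : ℝ) : ℝ :=
  √c * x₀ * cosh (√c * (T - t)) / sinh (√c * T)

variable {c T x₀}

theorem hasDerivAt_hyperbolicCurve (t : ℝ) :
    HasDerivAt (hyperbolicCurve c T x₀) (-hyperbolicRate c T x₀ t) t := by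
  have h := ((((hasDerivAt_id' t).const_sub T).const_mul √c).sinh.const_mul x₀).div_const
    (sinh (√c * T))
  exact h.congr_deriv (by unfold hyperbolicRate; ring)

theorem hasDerivAt_neg_hyperbolicRate (hc : 0 ≤ c) (t : ℝ) :
    HasDerivAt (fun t => -hyperbolicRate c T x₀ t) (c * hyperbolicCurve c T x₀ t) t := by
  have h := ((((hasDerivAt_id' t).const_sub T).const_mul √c).cosh.const_mul
    (√c * x₀)).div_const (sinh (√c * T)) |>.neg
  exact h.congr_deriv (by
    unfold hyperbolicCurve
    linear_combination (x₀ * sinh (√c * (T - t)) / sinh (√c * T)) * sq_sqrt hc)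

theorem hyperbolicCurve_zero (h : sinh (√c * T) ≠ 0) : hyperbolicCurve c T x₀ 0 = x₀ := by
  simp [hyperbolicCurve, h]

theorem hyperbolicCurve_self : hyperbolicCurve c T x₀ T = 0 := by
  simp [hyperbolicCurve]

theorem antitone_hyperbolicCurve (hT : 0 ≤ T) (hx₀ : 0 ≤ x₀) :
    Antitone (hyperbolicCurve c T x₀) := by
  intro t₁ t₂ h
  have hs : sinh (√c * (T - t₂)) ≤ sinh (√c * (T - t₁)) :=
    sinh_le_sinh.mpr (mul_le_mul_of_nonneg_left (by linarith) (sqrt_nonneg c))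
  exact div_le_div_of_nonneg_right (mul_le_mul_of_nonneg_left hs hx₀)
    (sinh_nonneg_iff.mpr (by positivity))

theorem integral_hyperbolicRate_sq_add_mul_sq (hc : 0 ≤ c) (hS : sinh (√c * T) ≠ 0) :
    ∫ t in (0:ℝ)..T, (hyperbolicRate c T x₀ t ^ 2 + c * hyperbolicCurve c T x₀ t ^ 2)
      = √c * x₀ ^ 2 * (cosh (√c * T) / sinh (√c * T)) := by
  simp only [← neg_sq (hyperbolicRate c T x₀ _)]
  rw [integral_sq_add_mul_sq_eq_of_hasDerivAt (fun t _ => hasDerivAt_hyperbolicCurve t)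
    (fun t _ => hasDerivAt_neg_hyperbolicRate hc t), hyperbolicCurve_self, hyperbolicCurve_zero hS]
  simp only [hyperbolicRate, sub_zero]
  ring

theorem integral_hyperbolicRate_sq_add_mul_sq_le (hT : 0 ≤ T) (hc : 0 ≤ c)
    (hS : sinh (√c * T) ≠ 0) {x x' : ℝ → ℝ}
    (hx : ∀ t ∈ Icc 0 T, HasDerivAt x (x' t) t)
    (hx' : ContinuousOn x' (Icc 0 T)) (hx0 : x 0 = x₀) (hxT : x T = 0) :
    ∫ t in (0:ℝ)..T, (hyperbolicRate c T x₀ t ^ 2 + c * hyperbolicCurve c T x₀ t ^ 2)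
      ≤ ∫ t in (0:ℝ)..T, (x' t ^ 2 + c * x t ^ 2) := by
  have hint : MeasureTheory.IntegrableOn (fun t => x' t ^ 2 + c * x t ^ 2) (Icc 0 T) :=
    ((hx'.pow 2).add
      (continuousOn_const.mul ((HasDerivAt.continuousOn hx).pow 2))).integrableOn_Icc
  simp only [← neg_sq (hyperbolicRate c T x₀ _)]
  exact integral_sq_add_mul_sq_le_of_hasDerivAt hT hc (fun t _ => hasDerivAt_hyperbolicCurve t)
    (fun t _ => hasDerivAt_neg_hyperbolicRate hc t) hx hint
    (hx0.trans (hyperbolicCurve_zero hS).symm) (hxT.trans hyperbolicCurve_self.symm)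

end HyperbolicCurve

theorem hyperbolic_optimal (T x₀ c : ℝ) (hT : 0 < T) (hc : 0 < c) :
    (∀ x x' : ℝ → ℝ, (∀ t ∈ Icc (0:ℝ) T, HasDerivAt x (x' t) t) →
        ContinuousOn x' (Icc 0 T) → x 0 = x₀ → x T = 0 →
        Real.sqrt c * x₀ ^ 2 * (Real.cosh (Real.sqrt c * T) / Real.sinh (Real.sqrt c * T))
          ≤ ∫ t in (0:ℝ)..T, ((x' t) ^ 2 + c * (x t) ^ 2)) ∧
    ((fun t : ℝ => x₀ * Real.sinh (Real.sqrt c * (T - t)) / Real.sinh (Real.sqrt c * T)) 0 = x₀) ∧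
    ((fun t : ℝ => x₀ * Real.sinh (Real.sqrt c * (T - t)) / Real.sinh (Real.sqrt c * T)) T = 0) ∧
    (0 ≤ x₀ → AntitoneOn
        (fun t : ℝ => x₀ * Real.sinh (Real.sqrt c * (T - t)) / Real.sinh (Real.sqrt c * T))
        (Icc 0 T)) ∧
    (∀ t : ℝ, HasDerivAt
        (fun t : ℝ => x₀ * Real.sinh (Real.sqrt c * (T - t)) / Real.sinh (Real.sqrt c * T))
        (-(Real.sqrt c * x₀ * Real.cosh (Real.sqrt c * (T - t)) / Real.sinh (Real.sqrt c * T))) t) ∧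
    ((∫ t in (0:ℝ)..T,
        ((Real.sqrt c * x₀ * Real.cosh (Real.sqrt c * (T - t)) / Real.sinh (Real.sqrt c * T)) ^ 2
          + c * (x₀ * Real.sinh (Real.sqrt c * (T - t)) / Real.sinh (Real.sqrt c * T)) ^ 2))
      = Real.sqrt c * x₀ ^ 2 * (Real.cosh (Real.sqrt c * T) / Real.sinh (Real.sqrt c * T))) ∧
    IsLeast {cost : ℝ | ∃ x x' : ℝ → ℝ, (∀ t ∈ Icc (0:ℝ) T, HasDerivAt x (x' t) t) ∧
        ContinuousOn x' (Icc 0 T) ∧ x 0 = x₀ ∧ x T = 0 ∧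
        cost = ∫ t in (0:ℝ)..T, ((x' t) ^ 2 + c * (x t) ^ 2)}
      (Real.sqrt c * x₀ ^ 2 * (Real.cosh (Real.sqrt c * T) / Real.sinh (Real.sqrt c * T))) := by
  have hS : sinh (√c * T) ≠ 0 := (sinh_pos_iff.mpr (by positivity)).ne'
  have hcost := integral_hyperbolicRate_sq_add_mul_sq (x₀ := x₀) hc.le hS
  have lower : ∀ x x' : ℝ → ℝ, (∀ t ∈ Icc (0:ℝ) T, HasDerivAt x (x' t) t) →
      ContinuousOn x' (Icc 0 T) → x 0 = x₀ → x T = 0 →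
      √c * x₀ ^ 2 * (cosh (√c * T) / sinh (√c * T))
        ≤ ∫ t in (0:ℝ)..T, (x' t ^ 2 + c * x t ^ 2) :=
    fun x x' hx hx' hx0 hxT =>
      hcost ▸ integral_hyperbolicRate_sq_add_mul_sq_le hT.le hc.le hS hx hx' hx0 hxT
  refine ⟨lower, hyperbolicCurve_zero hS, hyperbolicCurve_self,
    fun hx₀ => (antitone_hyperbolicCurve hT.le hx₀).antitoneOn _, hasDerivAt_hyperbolicCurve,
    hcost, ⟨hyperbolicCurve c T x₀, fun t => -hyperbolicRate c T x₀ t, ?_⟩, ?_⟩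
  · refine ⟨fun t _ => hasDerivAt_hyperbolicCurve t,
      HasDerivAt.continuousOn fun t _ => hasDerivAt_neg_hyperbolicRate hc.le t,
      hyperbolicCurve_zero hS, hyperbolicCurve_self, ?_⟩
    simp only [neg_sq, hcost]
  · rintro cost ⟨x, x', hx, hx', hx0, hxT, rfl⟩
    exact lower x x' hx hx' hx0 hxT
end

section
/- Fix x₀ > 0, c > 0 and T > 0, and set T̂ = min(T, 2√(x₀/c)). Define the curve x^{MQ}(t) = (c t²/4 − t(c T̂/4 + x₀/T̂) + x₀) for t ∈ [0, T̂] and x^{MQ}(t) = 0 for t ∈ [T̂, T]. Then x^{MQ} is continuously differentiable on [0,T], nonincreasing, with x^{MQ}(0) = x₀ and x^{MQ}(T) = 0, and for every nonincreasing continuously differentiable curve x : [0,T] → ℝ with x(0) = x₀ and x(T) = 0 one has ∫₀^T ((x'(t))² + c·x(t)) dt ≥ −c² T̂³/48 + c T̂ x₀/2 + x₀²/T̂, with equality for x = x^{MQ}. In particular, when T > 2√(x₀/c) the optimal execution ends strictly before the terminal time T. -/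
/-!
Calibration. For an affine velocity `p t = c * t / 2 - α` (slope `c / 2`, as dictated by the
Euler–Lagrange equation `2 x'' = c`), the function `W = 2 p x - 2 p³ / (3 c)` satisfies
`W' = 2 p x' - p² + c x`, hence `x'² + c x = W' + (x' - p)²`. Integrating over `[0, T̂]` with
`α = c T̂ / 4 + x₀ / T̂` bounds the cost by boundary values only, because `p T̂ * x T̂ = 0`: either
`T̂ = T` and `x T = 0`, or `T̂ = 2 √(x₀ / c)` and `p T̂ = 0`. On `[T̂, T]` the integrand is
nonnegative, since a nonincreasing curve ending at `0` is nonnegative. The curve `x^{MQ}` has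
velocity exactly `p` on `[0, T̂]` and vanishes afterwards, so it attains the bound; when `T̂ < T`
its velocity vanishes at `T̂` from both sides, which makes it `C¹`.
-/

open Set intervalIntegral

section Gluing

variable {f g f' g' : ℝ → ℝ} {s : ℝ}

theorem hasDerivAt_ite_le (hf : ∀ t, HasDerivAt f (f' t) t) (hg : ∀ t, HasDerivAt g (g' t) t)
    (hs : f s = g s) (hs' : f' s = g' s) (t : ℝ) :
    HasDerivAt (fun u => if u ≤ s then f u else g u) (if t ≤ s then f' t else g' t) t := by
  rcases lt_trichotomy t s with hts | rfl | hst
  · rw [if_pos hts.le]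
    refine (hf t).congr_of_eventuallyEq ?_
    filter_upwards [Iio_mem_nhds hts] with u hu
    rw [if_pos hu.le]
  · have hleft : HasDerivWithinAt (fun u => if u ≤ t then f u else g u) (f' t) (Iic t) t :=
      (hf t).hasDerivWithinAt.congr (fun u hu => if_pos hu) (if_pos le_rfl)
    have hright : HasDerivWithinAt (fun u => if u ≤ t then f u else g u) (f' t) (Ici t) t := by
      refine hs' ▸ (hg t).hasDerivWithinAt.congr (fun u hu => ?_) (by rw [if_pos le_rfl, hs])
      split_ifs with hut
      · rw [le_antisymm hut hu, hs]
      · rfl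
    rw [if_pos le_rfl, ← hasDerivWithinAt_univ, ← Iic_union_Ici]
    exact hleft.union hright
  · rw [if_neg hst.not_ge]
    refine (hg t).congr_of_eventuallyEq ?_
    filter_upwards [Ioi_mem_nhds hst] with u hu
    rw [if_neg hu.not_ge]

theorem contDiff_one_ite_le (hf : ∀ t, HasDerivAt f (f' t) t) (hg : ∀ t, HasDerivAt g (g' t) t)
    (hf'c : Continuous f') (hg'c : Continuous g') (hs : f s = g s) (hs' : f' s = g' s) :
    ContDiff ℝ 1 (fun u => if u ≤ s then f u else g u) := by
  have hd := hasDerivAt_ite_le hf hg hs hs'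
  rw [contDiff_one_iff_deriv, funext fun t => (hd t).deriv]
  refine ⟨fun t => (hd t).differentiableAt, hf'c.if_le hg'c continuous_id continuous_const ?_⟩
  rintro t rfl
  exact hs'

end Gluing

section Calibration

variable {c α a b : ℝ} {x x' : ℝ → ℝ}

noncomputable def calibration (c α : ℝ) (x : ℝ → ℝ) (t : ℝ) : ℝ :=
  2 * (c * t / 2 - α) * x t - 2 / (3 * c) * (c * t / 2 - α) ^ 3

theorem hasDerivAt_calibration (hc : c ≠ 0) {t v : ℝ} (hx : HasDerivAt x v t) :
    HasDerivAt (calibration c α x)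
      (2 * (c * t / 2 - α) * v - (c * t / 2 - α) ^ 2 + c * x t) t := by
  have hp : HasDerivAt (fun u => c * u / 2 - α) (c / 2) t := by
    simpa using ((hasDerivAt_id t).const_mul c).div_const 2 |>.sub_const α
  refine (((hp.const_mul 2).mul hx).sub ((hp.pow 3).const_mul (2 / (3 * c)))).congr_deriv ?_
  field_simp
  ring

theorem integral_sq_add_mul_eq (hc : c ≠ 0) (hab : a ≤ b) (hxc : ContinuousOn x (Icc a b))
    (hx : ∀ t ∈ Ioo a b, HasDerivAt x (x' t) t) (hx'c : ContinuousOn x' (Icc a b)) :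
    ∫ t in a..b, (x' t ^ 2 + c * x t) =
      calibration c α x b - calibration c α x a + ∫ t in a..b, (x' t - (c * t / 2 - α)) ^ 2 := by
  have hsplit : ∀ t, x' t ^ 2 + c * x t =
      (2 * (c * t / 2 - α) * x' t - (c * t / 2 - α) ^ 2 + c * x t) + (x' t - (c * t / 2 - α)) ^ 2 :=
    fun t => by ring
  simp_rw [hsplit]
  have hint1 : IntervalIntegrable
      (fun t => 2 * (c * t / 2 - α) * x' t - (c * t / 2 - α) ^ 2 + c * x t)
      MeasureTheory.volume a b :=
    ContinuousOn.intervalIntegrable_of_Icc hab (by fun_prop)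
  have hint2 : IntervalIntegrable (fun t => (x' t - (c * t / 2 - α)) ^ 2)
      MeasureTheory.volume a b :=
    ContinuousOn.intervalIntegrable_of_Icc hab (by fun_prop)
  rw [integral_add hint1 hint2, integral_eq_sub_of_hasDerivAt_of_le hab
    (by unfold calibration; fun_prop) (fun t ht => hasDerivAt_calibration hc (hx t ht)) hint1]

end Calibration

section MQ

variable {c x₀ τ T : ℝ}

noncomputable def mqRate (c x₀ τ : ℝ) : ℝ := c * τ / 4 + x₀ / τ

noncomputable def mqCurve (c x₀ τ t : ℝ) : ℝ := c * t ^ 2 / 4 - t * mqRate c x₀ τ + x₀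

noncomputable def mqPath (c x₀ τ t : ℝ) : ℝ := if t ≤ τ then mqCurve c x₀ τ t else 0

noncomputable def mqCost (c x₀ τ : ℝ) : ℝ := -c ^ 2 * τ ^ 3 / 48 + c * τ * x₀ / 2 + x₀ ^ 2 / τ

theorem mqCurve_self (hτ : τ ≠ 0) : mqCurve c x₀ τ τ = 0 := by
  unfold mqCurve mqRate
  field_simp
  ring

@[fun_prop]
theorem continuous_mqCurve : Continuous (mqCurve c x₀ τ) := by
  unfold mqCurve
  fun_prop

theorem hasDerivAt_mqCurve (t : ℝ) :
    HasDerivAt (mqCurve c x₀ τ) (c * t / 2 - mqRate c x₀ τ) t := by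
  have := (((hasDerivAt_pow 2 t).const_mul c).div_const 4).sub
    ((hasDerivAt_id t).mul_const (mqRate c x₀ τ)) |>.add_const x₀
  exact this.congr_deriv (by ring)

theorem mul_sub_mqRate_eq_zero (hτ : τ ≠ 0) (hτc : c * τ ^ 2 = 4 * x₀) :
    c * τ / 2 - mqRate c x₀ τ = 0 := by
  unfold mqRate
  field_simp
  linarith

theorem antitoneOn_mqCurve (hc : 0 ≤ c) (hτ : 0 < τ) (hτc : c * τ ^ 2 ≤ 4 * x₀) :
    AntitoneOn (mqCurve c x₀ τ) (Iic τ) := by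
  have hrate : c * τ / 2 ≤ mqRate c x₀ τ := by
    have : c * τ / 4 ≤ x₀ / τ := by rw [le_div_iff₀ hτ]; linarith
    unfold mqRate
    linarith
  refine antitoneOn_of_deriv_nonpos (convex_Iic τ) continuous_mqCurve.continuousOn
    (fun t _ => (hasDerivAt_mqCurve t).differentiableAt.differentiableWithinAt) fun t ht => ?_
  rw [interior_Iic] at ht
  rw [(hasDerivAt_mqCurve t).deriv]
  nlinarith [mem_Iio.mp ht]

theorem calibration_sub_eq_mqCost (hc : c ≠ 0) (hτ : τ ≠ 0) {x : ℝ → ℝ} (hx0 : x 0 = x₀)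
    (hxτ : (c * τ / 2 - mqRate c x₀ τ) * x τ = 0) :
    calibration c (mqRate c x₀ τ) x τ - calibration c (mqRate c x₀ τ) x 0 = mqCost c x₀ τ := by
  have hxτ' : 2 * (c * τ / 2 - mqRate c x₀ τ) * x τ = 0 := by rw [mul_assoc, hxτ, mul_zero]
  unfold calibration
  rw [hxτ', hx0]
  unfold mqRate mqCost
  field_simp
  ring

theorem mqPath_zero (hτ : 0 ≤ τ) : mqPath c x₀ τ 0 = x₀ := by
  simp [mqPath, mqCurve, hτ]

theorem mqPath_of_le (hτ : τ ≠ 0) {t : ℝ} (ht : τ ≤ t) : mqPath c x₀ τ t = 0 := by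
  unfold mqPath
  split_ifs with htτ
  · rw [le_antisymm htτ ht, mqCurve_self hτ]
  · rfl

theorem antitone_mqPath (hc : 0 ≤ c) (hτ : 0 < τ) (hτc : c * τ ^ 2 ≤ 4 * x₀) :
    Antitone (mqPath c x₀ τ) := by
  refine AntitoneOn.Iic_union_Ici (a := τ) ?_ ?_
  · intro s hs t ht hst
    simp only [mqPath, if_pos (mem_Iic.mp hs), if_pos (mem_Iic.mp ht)]
    exact antitoneOn_mqCurve hc hτ hτc hs ht hst
  · intro s hs t ht _
    rw [mqPath_of_le hτ.ne' hs, mqPath_of_le hτ.ne' ht]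

theorem contDiff_mqPath (hτ : τ ≠ 0) (hτc : c * τ ^ 2 = 4 * x₀) :
    ContDiff ℝ 1 (mqPath c x₀ τ) :=
  contDiff_one_ite_le hasDerivAt_mqCurve (fun t => hasDerivAt_const t 0) (by fun_prop)
    continuous_const (mqCurve_self hτ) (mul_sub_mqRate_eq_zero hτ hτc)

theorem contDiffOn_mqPath (hτ : 0 < τ) (hτT : τ ≤ T) (hstop : τ < T → c * τ ^ 2 = 4 * x₀) :
    ContDiffOn ℝ 1 (mqPath c x₀ τ) (Icc 0 T) := by
  rcases hτT.eq_or_lt with rfl | hlt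
  · have : ContDiff ℝ 1 (mqCurve c x₀ τ) := by unfold mqCurve; fun_prop
    exact this.contDiffOn.congr fun t ht => if_pos ht.2
  · exact (contDiff_mqPath hτ.ne' (hstop hlt)).contDiffOn

theorem integral_mqPath_eq (hc : c ≠ 0) (hτ : 0 < τ) (hτT : τ ≤ T) :
    ∫ t in (0:ℝ)..T, ((deriv (mqPath c x₀ τ) t) ^ 2 + c * mqPath c x₀ τ t) = mqCost c x₀ τ := by
  have hleft : EqOn (fun t => (deriv (mqPath c x₀ τ) t) ^ 2 + c * mqPath c x₀ τ t)
      (fun t => (c * t / 2 - mqRate c x₀ τ) ^ 2 + c * mqCurve c x₀ τ t) (uIoo 0 τ) := by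
    intro t ht
    rw [uIoo_of_le hτ.le] at ht
    have hev : mqPath c x₀ τ =ᶠ[nhds t] mqCurve c x₀ τ := by
      filter_upwards [Iio_mem_nhds ht.2] with u hu
      exact if_pos hu.le
    simp only [hev.deriv_eq, (hasDerivAt_mqCurve t).deriv, hev.eq_of_nhds]
  have hright : EqOn (fun t => (deriv (mqPath c x₀ τ) t) ^ 2 + c * mqPath c x₀ τ t) 0
      (uIoo τ T) := by
    intro t ht
    rw [uIoo_of_le hτT] at ht
    have hev : mqPath c x₀ τ =ᶠ[nhds t] fun _ => 0 := by
      filter_upwards [Ioi_mem_nhds ht.1] with u hu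
      exact mqPath_of_le hτ.ne' hu.le
    simp [hev.deriv_eq, hev.eq_of_nhds]
  have hcurve : ∫ t in (0:ℝ)..τ, ((c * t / 2 - mqRate c x₀ τ) ^ 2 + c * mqCurve c x₀ τ t) =
      mqCost c x₀ τ := by
    rw [integral_sq_add_mul_eq hc hτ.le (by fun_prop) (fun t _ => hasDerivAt_mqCurve t)
      (by fun_prop), calibration_sub_eq_mqCost (x₀ := x₀) hc hτ.ne' (by simp [mqCurve])
      (by rw [mqCurve_self hτ.ne', mul_zero])]
    simp
  rw [← integral_add_adjacent_intervals
    ((Continuous.intervalIntegrable (by fun_prop) _ _).congr_uIoo hleft.symm)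
    (intervalIntegrable_const.congr_uIoo hright.symm),
    integral_congr_uIoo hleft, integral_congr_uIoo hright, hcurve]
  simp

theorem mqCost_le_integral (hc : 0 < c) (hτ : 0 < τ) (hτT : τ ≤ T)
    (hstop : τ < T → c * τ ^ 2 = 4 * x₀) {x x' : ℝ → ℝ}
    (hx : ∀ t ∈ Icc (0:ℝ) T, HasDerivAt x (x' t) t) (hx'c : ContinuousOn x' (Icc 0 T))
    (hanti : AntitoneOn x (Icc 0 T)) (hx0 : x 0 = x₀) (hxT : x T = 0) :
    mqCost c x₀ τ ≤ ∫ t in (0:ℝ)..T, (x' t ^ 2 + c * x t) := by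
  have hxc : ContinuousOn x (Icc 0 T) := HasDerivAt.continuousOn hx
  have hleft : Icc 0 τ ⊆ Icc 0 T := Icc_subset_Icc_right hτT
  have hright : Icc τ T ⊆ Icc 0 T := Icc_subset_Icc_left hτ.le
  have hnonneg : ∀ t ∈ Icc 0 T, 0 ≤ x t := fun t ht =>
    hxT ▸ hanti ht (right_mem_Icc.mpr (hτ.le.trans hτT)) ht.2
  have hcost : ContinuousOn (fun t => x' t ^ 2 + c * x t) (Icc 0 T) := by fun_prop
  have hτx : (c * τ / 2 - mqRate c x₀ τ) * x τ = 0 := by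
    rcases hτT.eq_or_lt with rfl | hlt
    · rw [hxT, mul_zero]
    · rw [mul_sub_mqRate_eq_zero hτ.ne' (hstop hlt), zero_mul]
  rw [← integral_add_adjacent_intervals ((hcost.mono hleft).intervalIntegrable_of_Icc hτ.le)
      ((hcost.mono hright).intervalIntegrable_of_Icc hτT),
    integral_sq_add_mul_eq (α := mqRate c x₀ τ) hc.ne' hτ.le (hxc.mono hleft)
      (fun t ht => hx t (hleft (Ioo_subset_Icc_self ht))) (hx'c.mono hleft),
    calibration_sub_eq_mqCost hc.ne' hτ.ne' hx0 hτx]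
  have hdefect : 0 ≤ ∫ t in (0:ℝ)..τ, (x' t - (c * t / 2 - mqRate c x₀ τ)) ^ 2 :=
    integral_nonneg hτ.le fun _ _ => sq_nonneg _
  have htail : 0 ≤ ∫ t in τ..T, (x' t ^ 2 + c * x t) :=
    integral_nonneg hτT fun t ht =>
      add_nonneg (sq_nonneg _) (mul_nonneg hc.le (hnonneg t (hright ht)))
  linarith

end MQ

theorem quadratic_case_optimal (x₀ c T : ℝ) (hx₀ : 0 < x₀) (hc : 0 < c) (hT : 0 < T)
    (That : ℝ) (hThat : That = min T (2 * Real.sqrt (x₀ / c)))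
    (xMQ : ℝ → ℝ)
    (hxMQ : ∀ t : ℝ, xMQ t =
      if t ≤ That then c * t ^ 2 / 4 - t * (c * That / 4 + x₀ / That) + x₀ else 0) :
    ContDiffOn ℝ 1 xMQ (Icc 0 T) ∧
    AntitoneOn xMQ (Icc 0 T) ∧
    xMQ 0 = x₀ ∧ xMQ T = 0 ∧
    (∀ x x' : ℝ → ℝ, (∀ t ∈ Icc (0:ℝ) T, HasDerivAt x (x' t) t) →
        ContinuousOn x' (Icc 0 T) → AntitoneOn x (Icc 0 T) → x 0 = x₀ → x T = 0 →
        -c ^ 2 * That ^ 3 / 48 + c * That * x₀ / 2 + x₀ ^ 2 / That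
          ≤ ∫ t in (0:ℝ)..T, ((x' t) ^ 2 + c * x t)) ∧
    ((∫ t in (0:ℝ)..T, ((deriv xMQ t) ^ 2 + c * xMQ t))
      = -c ^ 2 * That ^ 3 / 48 + c * That * x₀ / 2 + x₀ ^ 2 / That) ∧
    (2 * Real.sqrt (x₀ / c) < T → That < T ∧ ∀ t ∈ Icc That T, xMQ t = 0) := by
  have hsqrt : c * (2 * Real.sqrt (x₀ / c)) ^ 2 = 4 * x₀ := by
    rw [mul_pow, Real.sq_sqrt (by positivity)]
    field_simp
    ring
  have hτ : 0 < That := hThat ▸ lt_min hT (by positivity)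
  have hτT : That ≤ T := hThat ▸ min_le_left _ _
  have hτc : c * That ^ 2 ≤ 4 * x₀ := by
    rw [← hsqrt, hThat]
    gcongr
    exact min_le_right _ _
  have hstop : That < T → c * That ^ 2 = 4 * x₀ := fun h => by
    rw [hThat, min_eq_right ((min_lt_iff.mp (hThat ▸ h)).resolve_left (lt_irrefl T)).le, hsqrt]
  obtain rfl : xMQ = mqPath c x₀ That := funext hxMQ
  refine ⟨contDiffOn_mqPath hτ hτT hstop, (antitone_mqPath hc.le hτ hτc).antitoneOn _,
    mqPath_zero hτ.le, mqPath_of_le hτ.ne' hτT,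
    fun x x' hx hx'c hanti hx0 hxT => mqCost_le_integral hc hτ hτT hstop hx hx'c hanti hx0 hxT,
    integral_mqPath_eq hc.ne' hτ hτT,
    fun h => ⟨hThat ▸ min_lt_of_right_lt h, fun t ht => mqPath_of_le hτ.ne' ht.1⟩⟩
end

section
/- Let β > 0, T > 0, and κ, σ, η, x₀, y ∈ ℝ, and set A(t) = (η x₀/(β T)) (1 − e^{−βt}). Then κ ∫₀^T ( (y e^{−βt} − A(t))² + (σ²/(2β))(1 − e^{−2βt}) ) dt = (κ y²/(2β))(1 − e^{−2βT}) + (κ σ²/(4β²))(2βT + e^{−2βT} − 1) + (κ η x₀ y/(β² T))(2 e^{−βT} − 1 − e^{−2βT}) + (κ η² x₀²/(2β³ T²))(2βT + 4 e^{−βT} − e^{−2βT} − 3). -/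
/-!
Expanding the square, the integrand is a linear combination of `1`, `e^{-βt}` and `e^{-2βt}`
whose coefficients are polynomial in `y`, `σ²/(2β)` and the leakage amplitude `η x₀/(β T)`;
integrating the three exponentials termwise gives the closed form.
-/

open Real intervalIntegral

theorem integral_exp_mul (c a b : ℝ) (hc : c ≠ 0) :
    ∫ t in a..b, exp (c * t) = (exp (c * b) - exp (c * a)) / c := by
  rw [integral_comp_mul_left (fun x => exp x) hc, integral_exp, smul_eq_mul, inv_mul_eq_div]

theorem exp_neg_two_mul_mul (β t : ℝ) : exp (-2 * β * t) = exp (-β * t) ^ 2 := by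
  rw [← exp_nat_mul]
  ring_nf

theorem integral_const_add_exp_add_exp (β T c₀ c₁ c₂ : ℝ) (hβ : β ≠ 0) :
    ∫ t in (0:ℝ)..T, (c₀ + c₁ * exp (-β * t) + c₂ * exp (-2 * β * t))
      = c₀ * T + c₁ * (1 - exp (-β * T)) / β + c₂ * (1 - exp (-2 * β * T)) / (2 * β) := by
  have hβ₁ : -β ≠ 0 := neg_ne_zero.mpr hβ
  have hβ₂ : -2 * β ≠ 0 := mul_ne_zero (by norm_num) hβ
  have integrable {f : ℝ → ℝ} (hf : Continuous f) : IntervalIntegrable f MeasureTheory.volume 0 T :=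
    hf.intervalIntegrable 0 T
  rw [integral_add (integrable (by fun_prop)) (integrable (by fun_prop)),
    integral_add (integrable (by fun_prop)) (integrable (by fun_prop)), integral_const,
    integral_const_mul, integral_const_mul, integral_exp_mul _ _ _ hβ₁, integral_exp_mul _ _ _ hβ₂,
    mul_zero, mul_zero, exp_zero]
  field_simp
  ring

theorem vwap_informational_cost (β T κ σ η x₀ y : ℝ) (hβ : 0 < β) (hT : 0 < T)
    (A : ℝ → ℝ) (hA : ∀ t : ℝ, A t = η * x₀ / (β * T) * (1 - Real.exp (-β * t))) :
    κ * ∫ t in (0:ℝ)..T,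
        ((y * Real.exp (-β * t) - A t) ^ 2 + σ ^ 2 / (2 * β) * (1 - Real.exp (-2 * β * t)))
      = κ * y ^ 2 / (2 * β) * (1 - Real.exp (-2 * β * T))
        + κ * σ ^ 2 / (4 * β ^ 2) * (2 * β * T + Real.exp (-2 * β * T) - 1)
        + κ * η * x₀ * y / (β ^ 2 * T) * (2 * Real.exp (-β * T) - 1 - Real.exp (-2 * β * T))
        + κ * η ^ 2 * x₀ ^ 2 / (2 * β ^ 3 * T ^ 2)
            * (2 * β * T + 4 * Real.exp (-β * T) - Real.exp (-2 * β * T) - 3) := by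
  set a := η * x₀ / (β * T) with ha
  set s := σ ^ 2 / (2 * β) with hs
  have integrand (t : ℝ) :
      (y * exp (-β * t) - A t) ^ 2 + s * (1 - exp (-2 * β * t))
        = (a ^ 2 + s) + -2 * a * (y + a) * exp (-β * t) + ((y + a) ^ 2 - s) * exp (-2 * β * t) := by
    rw [hA, exp_neg_two_mul_mul]
    ring
  simp_rw [integrand, integral_const_add_exp_add_exp β T _ _ _ hβ.ne', exp_neg_two_mul_mul, ha, hs]
  field_simp
  ring
end

section
/- Let σ, β, κ, c, η ∈ ℝ and let A, B, C, F : (0,∞) → ℝ be differentiable functions satisfying the Riccati system A'(T) = −A(T)² − η A(T) C(T) − (η²/4) C(T)² + c, B'(T) = −η² B(T)² − B(T)(η C(T) + 2β) + κ − (1/4) C(T)², C'(T) = −(η/2) C(T)² − C(T)(η² B(T) + A(T) + β) − 2η A(T) B(T), and F'(T) = σ² B(T). Define u(T,x,y) = x² A(T) + y² B(T) + x y C(T) + F(T). Then for all T > 0 and all x, y ∈ ℝ, u satisfies the semilinear HJB equation ∂_T u = (1/2) σ² ∂²_{yy} u − β y ∂_y u + κ y² + c x² − ( (∂_x u + η ∂_y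 u)/2 )², and the associated optimal feedback liquidation rate (∂_x u + η ∂_y u)/2 equals ( x (2A(T) + η C(T)) + y (C(T) + 2η B(T)) ) / 2. -/
/-!
The ansatz `u = x² A + y² B + x y C + F` is quadratic in the state, so its spatial derivatives
are read off directly: `u_x = 2xA + yC`, `u_y = 2yB + xC`, `u_yy = 2B`. Its time derivative is
`x² A' + y² B' + x y C' + F'`, and after substituting the Riccati system both sides of the HJB
equation become the same polynomial in `x, y` and the coefficients: the coefficients of
`x²`, `y²`, `x y` and `1` match by the equations for `A`, `B`, `C` and `F` respectively.
-/

section QuadraticAnsatz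

variable {𝕜 : Type*} [NontriviallyNormedField 𝕜]

theorem hasDerivAt_quadratic_fst (a b c f x y : 𝕜) :
    HasDerivAt (fun x' => x' ^ 2 * a + y ^ 2 * b + x' * y * c + f) (2 * x * a + y * c) x :=
  (((((hasDerivAt_pow 2 x).mul_const a).add_const (y ^ 2 * b)).add
    (((hasDerivAt_id x).mul_const y).mul_const c)).add_const f).congr_deriv (by ring)

theorem hasDerivAt_quadratic_snd (a b c f x y : 𝕜) :
    HasDerivAt (fun y' => x ^ 2 * a + y' ^ 2 * b + x * y' * c + f) (2 * y * b + x * c) y :=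
  (((((hasDerivAt_pow 2 y).mul_const b).const_add (x ^ 2 * a)).add
    (((hasDerivAt_id y).const_mul x).mul_const c)).add_const f).congr_deriv (by ring)

theorem deriv_deriv_quadratic_snd (a b c f x y : 𝕜) :
    deriv (fun y' => deriv (fun y'' => x ^ 2 * a + y'' ^ 2 * b + x * y'' * c + f) y') y
      = 2 * b := by
  have hfirst : (fun y' => deriv (fun y'' => x ^ 2 * a + y'' ^ 2 * b + x * y'' * c + f) y')
      = fun y' => 2 * y' * b + x * c :=
    funext fun y' => (hasDerivAt_quadratic_snd a b c f x y').deriv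
  rw [hfirst]
  exact ((((hasDerivAt_id y).const_mul 2).mul_const b).add_const (x * c)).deriv.trans
    (by ring)

theorem HasDerivAt.quadratic_coeffs {A B C F : 𝕜 → 𝕜} {A' B' C' F' t : 𝕜}
    (hA : HasDerivAt A A' t) (hB : HasDerivAt B B' t) (hC : HasDerivAt C C' t)
    (hF : HasDerivAt F F' t) (x y : 𝕜) :
    HasDerivAt (fun t' => x ^ 2 * A t' + y ^ 2 * B t' + x * y * C t' + F t')
      (x ^ 2 * A' + y ^ 2 * B' + x * y * C' + F') t :=
  (((hA.const_mul _).add (hB.const_mul _)).add (hC.const_mul _)).add hF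

end QuadraticAnsatz

theorem riccati_rhs_eq_hjb_rhs {K : Type*} [Field K] [CharZero K]
    (σ β κ c η A B C x y : K) :
    x ^ 2 * (-A ^ 2 - η * A * C - η ^ 2 / 4 * C ^ 2 + c)
        + y ^ 2 * (-η ^ 2 * B ^ 2 - B * (η * C + 2 * β) + κ - 1 / 4 * C ^ 2)
        + x * y * (-(η / 2) * C ^ 2 - C * (η ^ 2 * B + A + β) - 2 * η * A * B)
        + σ ^ 2 * B
      = 1 / 2 * σ ^ 2 * (2 * B) - β * y * (2 * y * B + x * C) + κ * y ^ 2 + c * x ^ 2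
        - ((2 * x * A + y * C + η * (2 * y * B + x * C)) / 2) ^ 2 := by
  ring

theorem riccati_solves_hjb (σ β κ c η : ℝ) (A B C F : ℝ → ℝ)
    (hA : ∀ T : ℝ, 0 < T →
      HasDerivAt A (-(A T) ^ 2 - η * A T * C T - η ^ 2 / 4 * (C T) ^ 2 + c) T)
    (hB : ∀ T : ℝ, 0 < T →
      HasDerivAt B (-η ^ 2 * (B T) ^ 2 - B T * (η * C T + 2 * β) + κ - 1 / 4 * (C T) ^ 2) T)
    (hC : ∀ T : ℝ, 0 < T →
      HasDerivAt C (-(η / 2) * (C T) ^ 2 - C T * (η ^ 2 * B T + A T + β) - 2 * η * A T * B T) T)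
    (hF : ∀ T : ℝ, 0 < T → HasDerivAt F (σ ^ 2 * B T) T)
    (u : ℝ → ℝ → ℝ → ℝ)
    (hu : ∀ T x y : ℝ, u T x y = x ^ 2 * A T + y ^ 2 * B T + x * y * C T + F T) :
    ∀ T : ℝ, 0 < T → ∀ x y : ℝ,
      HasDerivAt (fun T' => u T' x y)
        (1 / 2 * σ ^ 2 * deriv (fun y' => deriv (fun y'' => u T x y'') y') y
          - β * y * deriv (fun y' => u T x y') y + κ * y ^ 2 + c * x ^ 2
          - ((deriv (fun x' => u T x' y) x + η * deriv (fun y' => u T x y') y) / 2) ^ 2) T ∧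
      (deriv (fun x' => u T x' y) x + η * deriv (fun y' => u T x y') y) / 2
        = (x * (2 * A T + η * C T) + y * (C T + 2 * η * B T)) / 2 := by
  intro T hT x y
  simp only [hu]
  rw [(hasDerivAt_quadratic_fst (A T) (B T) (C T) (F T) x y).deriv,
    (hasDerivAt_quadratic_snd (A T) (B T) (C T) (F T) x y).deriv,
    deriv_deriv_quadratic_snd]
  refine ⟨?_, by ring⟩
  rw [← riccati_rhs_eq_hjb_rhs]
  exact (hA T hT).quadratic_coeffs (hB T hT) (hC T hT) (hF T hT) x y
end

section
/- Let σ, β, κ, c, η ∈ ℝ and let A, B, C, F : (0,∞) → ℝ be differentiable functions such that u(T,x,y) = x² A(T) + y² B(T) + x y C(T) + F(T) satisfies, for all T > 0 and all x, y ∈ ℝ, the semilinear HJB equation ∂_T u = (1/2) σ² ∂²_{yy} u − β y ∂_y u + κ y² + c x² − ( (∂_x u + η ∂_y u)/2 )². Then the coefficients necessarily satisfy the Riccati system A'(T) = −A(T)² − η A(T) C(T) − (η²/4) C(T)² + c, B'(T) = −η² B(T)² − B(T)(η C(T) + 2β) + κ − (1/4) C(T)², C'(T) = −(η/2) C(T)²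 − C(T)(η² B(T) + A(T) + β) − 2η A(T) B(T), and F'(T) = σ² B(T) for all T > 0. -/
/-! Evaluating the HJB equation at the four points `(x, y) ∈ {0, 1}²` recovers the four
coefficients: `F = u(·,0,0)`, `A = u(·,1,0) - u(·,0,0)`, `B = u(·,0,1) - u(·,0,0)` and
`C = u(·,1,1) - u(·,1,0) - u(·,0,1) + u(·,0,0)`. Hence each coefficient is differentiable,
with derivative the same combination of the right-hand sides of the equation, and the
Riccati system is the resulting polynomial identity. -/

section QuadraticPartials

variable {v : ℝ → ℝ → ℝ} {a b c f : ℝ}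

theorem deriv_snd_of_quadratic (hv : ∀ x y, v x y = x ^ 2 * a + y ^ 2 * b + x * y * c + f)
    (x y : ℝ) : deriv (fun y' => v x y') y = 2 * y * b + x * c := by
  simp only [hv]
  have h : HasDerivAt (fun y' : ℝ => x ^ 2 * a + y' ^ 2 * b + x * y' * c + f)
      (0 + 2 * y ^ (2 - 1) * b + x * 1 * c + 0) y :=
    (((hasDerivAt_const y _).add ((hasDerivAt_pow 2 y).mul_const b)).add
      (((hasDerivAt_id y).const_mul x).mul_const c)).add (hasDerivAt_const y _)
  rw [h.deriv]
  ring

theorem deriv_fst_of_quadratic (hv : ∀ x y, v x y = x ^ 2 * a + y ^ 2 * b + x * y * c + f)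
    (x y : ℝ) : deriv (fun x' => v x' y) x = 2 * x * a + y * c := by
  simp only [hv]
  have h : HasDerivAt (fun x' : ℝ => x' ^ 2 * a + y ^ 2 * b + x' * y * c + f)
      (2 * x ^ (2 - 1) * a + 0 + 1 * y * c + 0) x :=
    ((((hasDerivAt_pow 2 x).mul_const a).add (hasDerivAt_const x _)).add
      (((hasDerivAt_id x).mul_const y).mul_const c)).add (hasDerivAt_const x _)
  rw [h.deriv]
  ring

theorem deriv_deriv_snd_of_quadratic (hv : ∀ x y, v x y = x ^ 2 * a + y ^ 2 * b + x * y * c + f)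
    (x y : ℝ) : deriv (fun y' => deriv (fun y'' => v x y'') y') y = 2 * b := by
  simp only [deriv_snd_of_quadratic hv]
  have h : HasDerivAt (fun y' : ℝ => 2 * y' * b + x * c) (2 * 1 * b) y :=
    (((hasDerivAt_id y).const_mul 2).mul_const b).add_const _
  rw [h.deriv]
  ring

end QuadraticPartials

theorem hasDerivAt_coeffs_of_quadratic {A B C F : ℝ → ℝ} {u : ℝ → ℝ → ℝ → ℝ}
    {D : ℝ → ℝ → ℝ} {T : ℝ}
    (hu : ∀ T x y, u T x y = x ^ 2 * A T + y ^ 2 * B T + x * y * C T + F T)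
    (hD : ∀ x y, HasDerivAt (fun T' => u T' x y) (D x y) T) :
    HasDerivAt A (D 1 0 - D 0 0) T ∧ HasDerivAt B (D 0 1 - D 0 0) T ∧
      HasDerivAt C (D 1 1 - D 1 0 - D 0 1 + D 0 0) T ∧ HasDerivAt F (D 0 0) T := by
  have hA : A = fun T => u T 1 0 - u T 0 0 := by funext T; simp only [hu]; ring
  have hB : B = fun T => u T 0 1 - u T 0 0 := by funext T; simp only [hu]; ring
  have hC : C = fun T => u T 1 1 - u T 1 0 - u T 0 1 + u T 0 0 := by funext T; simp only [hu]; ring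
  have hF : F = fun T => u T 0 0 := by funext T; simp only [hu]; ring
  rw [hA, hB, hC, hF]
  exact ⟨(hD 1 0).sub (hD 0 0), (hD 0 1).sub (hD 0 0),
    (((hD 1 1).sub (hD 1 0)).sub (hD 0 1)).add (hD 0 0), hD 0 0⟩

theorem hjb_forces_riccati_general (σ β κ c η : ℝ) (A B C F : ℝ → ℝ)
    (u : ℝ → ℝ → ℝ → ℝ)
    (hu : ∀ T x y : ℝ, u T x y = x ^ 2 * A T + y ^ 2 * B T + x * y * C T + F T)
    (hHJB : ∀ T : ℝ, 0 < T → ∀ x y : ℝ,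
      HasDerivAt (fun T' => u T' x y)
        (1 / 2 * σ ^ 2 * deriv (fun y' => deriv (fun y'' => u T x y'') y') y
          - β * y * deriv (fun y' => u T x y') y + κ * y ^ 2 + c * x ^ 2
          - ((deriv (fun x' => u T x' y) x + η * deriv (fun y' => u T x y') y) / 2) ^ 2) T) :
    ∀ T : ℝ, 0 < T →
      HasDerivAt A (-(A T) ^ 2 - η * A T * C T - η ^ 2 / 4 * (C T) ^ 2 + c) T ∧
      HasDerivAt B (-η ^ 2 * (B T) ^ 2 - B T * (η * C T + 2 * β) + κ - 1 / 4 * (C T) ^ 2) T ∧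
      HasDerivAt C (-(η / 2) * (C T) ^ 2 - C T * (η ^ 2 * B T + A T + β) - 2 * η * A T * B T) T ∧
      HasDerivAt F (σ ^ 2 * B T) T := by
  intro T hT
  have hD : ∀ x y, HasDerivAt (fun T' => u T' x y)
      (1 / 2 * σ ^ 2 * (2 * B T) - β * y * (2 * y * B T + x * C T) + κ * y ^ 2 + c * x ^ 2
        - ((2 * x * A T + y * C T + η * (2 * y * B T + x * C T)) / 2) ^ 2) T := by
    intro x y
    have h := hHJB T hT x y
    rwa [deriv_deriv_snd_of_quadratic (hu T), deriv_snd_of_quadratic (hu T),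
      deriv_fst_of_quadratic (hu T)] at h
  obtain ⟨hA, hB, hC, hF⟩ := hasDerivAt_coeffs_of_quadratic hu hD
  exact ⟨hA.congr_deriv (by ring), hB.congr_deriv (by ring), hC.congr_deriv (by ring),
    hF.congr_deriv (by ring)⟩

theorem hjb_forces_riccati (σ β κ c η : ℝ) (A B C F : ℝ → ℝ)
    (hAdiff : ∀ T : ℝ, 0 < T → DifferentiableAt ℝ A T)
    (hBdiff : ∀ T : ℝ, 0 < T → DifferentiableAt ℝ B T)
    (hCdiff : ∀ T : ℝ, 0 < T → DifferentiableAt ℝ C T)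
    (hFdiff : ∀ T : ℝ, 0 < T → DifferentiableAt ℝ F T)
    (u : ℝ → ℝ → ℝ → ℝ)
    (hu : ∀ T x y : ℝ, u T x y = x ^ 2 * A T + y ^ 2 * B T + x * y * C T + F T)
    (hHJB : ∀ T : ℝ, 0 < T → ∀ x y : ℝ,
      HasDerivAt (fun T' => u T' x y)
        (1 / 2 * σ ^ 2 * deriv (fun y' => deriv (fun y'' => u T x y'') y') y
          - β * y * deriv (fun y' => u T x y') y + κ * y ^ 2 + c * x ^ 2
          - ((deriv (fun x' => u T x' y) x + η * deriv (fun y' => u T x y') y) / 2) ^ 2) T) :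
    ∀ T : ℝ, 0 < T →
      HasDerivAt A (-(A T) ^ 2 - η * A T * C T - η ^ 2 / 4 * (C T) ^ 2 + c) T ∧
      HasDerivAt B (-η ^ 2 * (B T) ^ 2 - B T * (η * C T + 2 * β) + κ - 1 / 4 * (C T) ^ 2) T ∧
      HasDerivAt C (-(η / 2) * (C T) ^ 2 - C T * (η ^ 2 * B T + A T + β) - 2 * η * A T * B T) T ∧
      HasDerivAt F (σ ^ 2 * B T) T :=
  hjb_forces_riccati_general σ β κ c η A B C F u hu hHJB
end
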